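/- Let (D_i, Γⁱ)_{i∈ℕ} be a parametrix possessing complex of pre-Hilbert A-modules, with pseudoinverses g_i and projections p_i. Then every cycle is cohomologous to its harmonic projection: for each i ≥ 1 and every b ∈ Ker D_i one has b − p_i b = D_{i-1}(g_{i-1}(D_{i-1}* b)); in particular b − p_i b ∈ Rng D_{i-1}. -/

import Mathlib

/-- A pre-Hilbert module over a unital C*-algebra `A`: a left `A`-module equipped with an
`A`-valued inner product (`A`-linear in the first argument, conjugate-symmetric, positive
definite), whose norm is the one induced by the inner product. -/
class PreHilbertModule (A : Type*) (U : Type*) [CStarAlgebra A] [PartialOrder A]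
    [StarOrderedRing A] [NormedAddCommGroup U] [Module A U] extends Inner A U where
  inner_add_left (x y z : U) : inner (x + y) z = inner x z + inner y z
  inner_smul_left (a : A) (x y : U) : inner (a • x) y = a * inner x y
  star_inner (x y : U) : star (inner x y) = inner y x
  inner_self_nonneg (x : U) : 0 ≤ inner x x
  inner_self_eq_zero (x : U) : inner x x = 0 ↔ x = 0
  norm_eq (x : U) : ‖x‖ = Real.sqrt ‖inner x x‖

/-
Let `b` be a cycle of degree `i + 1` and `h = b - p b - D (g (D* b))`. Since `Δ` commutes with `D`,
`Δ h = D (p (D* b))`, which vanishes because harmonic elements are closed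
(`⟨Δ x, x⟩ = ⟨D* x, D* x⟩ + ⟨D x, D x⟩`, a sum of positive elements). So `h` is harmonic, hence
closed and coclosed. But `b - p b = Δ (g b)` puts `h` in `Rng D + Rng D*`, which is orthogonal to
such elements; thus `⟨h, h⟩ = 0`.
-/

namespace ContinuousLinearMap

variable {R : Type*} [Semiring R] {M₁ M₂ M₃ M₄ : Type*}
  [TopologicalSpace M₁] [AddCommMonoid M₁] [Module R M₁]
  [TopologicalSpace M₂] [AddCommMonoid M₂] [Module R M₂] [ContinuousAdd M₂]
  [TopologicalSpace M₃] [AddCommMonoid M₃] [Module R M₃] [ContinuousAdd M₃]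
  [TopologicalSpace M₄] [AddCommMonoid M₄] [Module R M₄]

/-- With `T = D_{i-1}`, `S = D_i` and `T'`, `S'` their adjoints this is the paper's `Δ_i`; in
degree `0` take `T = T' = 0`. -/
def laplacian (T : M₁ →L[R] M₂) (T' : M₂ →L[R] M₁) (S : M₂ →L[R] M₃) (S' : M₃ →L[R] M₂) :
    M₂ →L[R] M₂ :=
  T.comp T' + S'.comp S

theorem laplacian_comp_eq_comp_laplacian {T : M₁ →L[R] M₂} {T' : M₂ →L[R] M₁}
    {S : M₂ →L[R] M₃} {S' : M₃ →L[R] M₂} {Q : M₃ →L[R] M₄} {Q' : M₄ →L[R] M₃}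
    (hST : S.comp T = 0) (hQS : Q.comp S = 0) :
    (laplacian S S' Q Q').comp S = S.comp (laplacian T T' S S') := by
  rw [laplacian, laplacian, add_comp, comp_add, comp_assoc Q', hQS, comp_zero, add_zero,
    ← comp_assoc S T, hST, zero_comp, zero_add, comp_assoc]

end ContinuousLinearMap

section

variable {A : Type*} [CStarAlgebra A] [PartialOrder A] [StarOrderedRing A]
  {U V W : Type*} [NormedAddCommGroup U] [Module A U] [PreHilbertModule A U]
  [NormedAddCommGroup V] [Module A V] [PreHilbertModule A V]
  [NormedAddCommGroup W] [Module A W] [PreHilbertModule A W]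

namespace PreHilbertModule

open ContinuousLinearMap

theorem inner_zero_left (x : U) : (inner A (0 : U) x : A) = 0 := by
  simpa using inner_smul_left (0 : A) (0 : U) x

theorem inner_zero_right (x : U) : (inner A x (0 : U) : A) = 0 := by
  rw [← star_inner, inner_zero_left, star_zero]

theorem inner_self_add_inner_self_eq_zero_iff {x : U} {y : V} :
    (inner A x x : A) + inner A y y = 0 ↔ x = 0 ∧ y = 0 := by
  rw [add_eq_zero_iff_of_nonneg (inner_self_nonneg x) (inner_self_nonneg y), inner_self_eq_zero,
    inner_self_eq_zero]

def IsAdjoint (T : U →L[A] V) (T' : V →L[A] U) : Prop :=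
  ∀ u v, (inner A (T u) v : A) = inner A u (T' v)

theorem IsAdjoint.zero : IsAdjoint (0 : U →L[A] V) 0 := fun u v => by
  rw [zero_apply, zero_apply, inner_zero_left, inner_zero_right]

theorem IsAdjoint.inner_adjoint_left {T : U →L[A] V} {T' : V →L[A] U} (hT : IsAdjoint T T')
    (u : U) (v : V) : (inner A (T' v) u : A) = inner A v (T u) := by
  rw [← star_inner u, ← hT, star_inner]

variable {T : U →L[A] V} {T' : V →L[A] U} {S : V →L[A] W} {S' : W →L[A] V}

theorem inner_laplacian_apply_self (hT : IsAdjoint T T') (hS : IsAdjoint S S') (v : V) :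
    (inner A (laplacian T T' S S' v) v : A) = inner A (T' v) (T' v) + inner A (S v) (S v) := by
  rw [laplacian, add_apply, inner_add_left, comp_apply, comp_apply, hT, hS.inner_adjoint_left]

theorem laplacian_apply_eq_zero_iff (hT : IsAdjoint T T') (hS : IsAdjoint S S') {v : V} :
    laplacian T T' S S' v = 0 ↔ T' v = 0 ∧ S v = 0 := by
  refine ⟨fun hv => ?_, fun ⟨hT'v, hSv⟩ => by simp [laplacian, hT'v, hSv]⟩
  rw [← inner_self_add_inner_self_eq_zero_iff (A := A), ← inner_laplacian_apply_self hT hS, hv,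
    inner_zero_left]

theorem eq_zero_of_eq_add_of_laplacian_apply_eq_zero (hT : IsAdjoint T T')
    (hS : IsAdjoint S S') {v : V} (u : U) (w : W) (hv : v = T u + S' w)
    (hΔv : laplacian T T' S S' v = 0) : v = 0 := by
  obtain ⟨hT'v, hSv⟩ := (laplacian_apply_eq_zero_iff hT hS).mp hΔv
  rw [← inner_self_eq_zero (A := A)]
  nth_rewrite 1 [hv]
  rw [inner_add_left, hT, hS.inner_adjoint_left, hT'v, hSv, inner_zero_right, inner_zero_right,
    add_zero]

theorem sub_proj_eq_of_closed (hT : IsAdjoint T T') (hS : IsAdjoint S S')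
    {ΔU gU pU : U →L[A] U} {ΔV gV pV : V →L[A] V} (hΔV : ΔV = laplacian T T' S S')
    (hΔT : ΔV.comp T = T.comp ΔU) (hclosed : ∀ x, ΔU x = 0 → T x = 0)
    (hgU : ΔU.comp gU + pU = ContinuousLinearMap.id A U) (hpU : ΔU.comp pU = 0)
    (hgV : ΔV.comp gV + pV = ContinuousLinearMap.id A V) (hpV : ΔV.comp pV = 0)
    {b : V} (hb : S b = 0) : b - pV b = T (gU (T' b)) := by
  have hΔpV (v : V) : ΔV (pV v) = 0 := by simpa using DFunLike.congr_fun hpV v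
  have hΔgV (v : V) : ΔV (gV v) = v - pV v :=
    eq_sub_of_add_eq (by simpa using DFunLike.congr_fun hgV v)
  have hΔgU (u : U) : ΔU (gU u) = u - pU u :=
    eq_sub_of_add_eq (by simpa using DFunLike.congr_fun hgU u)
  have hTpU (u : U) : T (pU u) = 0 := hclosed _ (by simpa using DFunLike.congr_fun hpU u)
  have hΔb : ΔV b = T (T' b) := by simp [hΔV, laplacian, hb]
  have harmonic : ΔV (b - pV b - T (gU (T' b))) = 0 := by
    rw [map_sub, map_sub, hΔb, hΔpV, ← comp_apply ΔV T, hΔT, comp_apply, hΔgU, map_sub, hTpU,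
      sub_zero, sub_self]
  have hsplit : b - pV b - T (gU (T' b)) = T (T' (gV b) - gU (T' b)) + S' (S (gV b)) := by
    rw [← hΔgV, hΔV, map_sub, laplacian, add_apply, comp_apply, comp_apply]
    abel
  exact sub_eq_zero.mp
    (eq_zero_of_eq_add_of_laplacian_apply_eq_zero hT hS _ _ hsplit (hΔV ▸ harmonic))

end PreHilbertModule

end

theorem cycle_cohomologous_to_harmonic_projection_general
    {A : Type*} [CStarAlgebra A] [PartialOrder A] [StarOrderedRing A]
    {Γ : ℕ → Type*} [∀ i, NormedAddCommGroup (Γ i)] [∀ i, Module A (Γ i)]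
    [∀ i, PreHilbertModule A (Γ i)]
    (D : ∀ i, Γ i →L[A] Γ (i + 1)) (Dstar : ∀ i, Γ (i + 1) →L[A] Γ i)
    (hadj : ∀ i (u : Γ i) (v : Γ (i + 1)), (inner A (D i u) v : A) = inner A u (Dstar i v))
    (hcomplex : ∀ i, (D (i + 1)).comp (D i) = 0)
    -- the associated Laplacians (with `D_{-1} := 0`)
    (Δ : ∀ i, Γ i →L[A] Γ i)
    (hΔ0 : Δ 0 = (Dstar 0).comp (D 0))
    (hΔ : ∀ i, Δ (i + 1) = (D i).comp (Dstar i) + (Dstar (i + 1)).comp (D (i + 1)))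
    -- the complex is parametrix possessing
    (g p : ∀ i, Γ i →L[A] Γ i)
    (hb : ∀ i, ContinuousLinearMap.id A (Γ i) = (Δ i).comp (g i) + p i)
    (hc : ∀ i, (Δ i).comp (p i) = 0) :
    ∀ i (b : Γ (i + 1)), D (i + 1) b = 0 →
      b - p (i + 1) b = D i (g i (Dstar i b)) ∧ b - p (i + 1) b ∈ LinearMap.range (D i : Γ i →ₗ[A] Γ (i + 1)) := by
  have hΔ0' : Δ 0 = (0 : Γ 0 →L[A] Γ 0).laplacian 0 (D 0) (Dstar 0) := by
    simp [ContinuousLinearMap.laplacian, hΔ0]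
  have hclosed : ∀ i (x : Γ i), Δ i x = 0 → D i x = 0
    | 0, _, hx =>
      ((PreHilbertModule.laplacian_apply_eq_zero_iff .zero (hadj 0)).mp (by rwa [hΔ0'] at hx)).2
    | i + 1, _, hx =>
      ((PreHilbertModule.laplacian_apply_eq_zero_iff (hadj i) (hadj (i + 1))).mp
        (by rwa [hΔ i] at hx)).2
  have hcomm : ∀ i, (Δ (i + 1)).comp (D i) = (D i).comp (Δ i)
    | 0 => by
      rw [hΔ 0, hΔ0']
      exact ContinuousLinearMap.laplacian_comp_eq_comp_laplacian (ContinuousLinearMap.comp_zero _)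
        (hcomplex 0)
    | i + 1 => by
      rw [hΔ (i + 1), hΔ i]
      exact ContinuousLinearMap.laplacian_comp_eq_comp_laplacian (hcomplex i) (hcomplex (i + 1))
  intro i b hDb
  have hcohom := PreHilbertModule.sub_proj_eq_of_closed (hadj i) (hadj (i + 1)) (hΔ i)
    (hcomm i) (hclosed i) (hb i).symm (hc i) (hb (i + 1)).symm (hc (i + 1)) hDb
  exact ⟨hcohom, hcohom ▸ LinearMap.mem_range_self _ _⟩

/-- in a parametrix possessing complex of pre-Hilbert `A`-modules, every cycle
is cohomologous to its harmonic projection: for each `i ≥ 1` and every `b ∈ Ker D_i`,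
`b - p_i b = D_{i-1} (g_{i-1} (D_{i-1}* b))`; in particular `b - p_i b ∈ Rng D_{i-1}`. -/
theorem cycle_cohomologous_to_harmonic_projection
    {A : Type*} [CStarAlgebra A] [PartialOrder A] [StarOrderedRing A]
    {Γ : ℕ → Type*} [∀ i, NormedAddCommGroup (Γ i)] [∀ i, Module A (Γ i)]
    [∀ i, PreHilbertModule A (Γ i)]
    (D : ∀ i, Γ i →L[A] Γ (i + 1)) (Dstar : ∀ i, Γ (i + 1) →L[A] Γ i)
    (hadj : ∀ i (u : Γ i) (v : Γ (i + 1)), (inner A (D i u) v : A) = inner A u (Dstar i v))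
    (hcomplex : ∀ i, (D (i + 1)).comp (D i) = 0)
    -- the associated Laplacians (with `D_{-1} := 0`)
    (Δ : ∀ i, Γ i →L[A] Γ i)
    (hΔ0 : Δ 0 = (Dstar 0).comp (D 0))
    (hΔ : ∀ i, Δ (i + 1) = (D i).comp (Dstar i) + (Dstar (i + 1)).comp (D (i + 1)))
    -- the complex is parametrix possessing
    (g p : ∀ i, Γ i →L[A] Γ i)
    (ha : ∀ i, ContinuousLinearMap.id A (Γ i) = (g i).comp (Δ i) + p i)
    (hb : ∀ i, ContinuousLinearMap.id A (Γ i) = (Δ i).comp (g i) + p i)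
    (hc : ∀ i, (Δ i).comp (p i) = 0) :
    ∀ i (b : Γ (i + 1)), D (i + 1) b = 0 →
      b - p (i + 1) b = D i (g i (Dstar i b)) ∧ b - p (i + 1) b ∈ LinearMap.range (D i : Γ i →ₗ[A] Γ (i + 1)) :=
  cycle_cohomologous_to_harmonic_projection_general D Dstar hadj hcomplex Δ hΔ0 hΔ g p hb hc
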